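/- Let K be a field of characteristic different from 2, k ≥ 1, and let A_1, ..., A_k be antisymmetric square matrices over K (A_iᵀ = −A_i) with A_i of size n_i × n_i (each n_i ≥ 1), and set r_i = rank(A_i). Then there exists an antisymmetric completion M of the block diagonal partial matrix diag(A_1, ..., A_k) with rank(M) = max{r_i : i = 1, ..., k}, and every antisymmetric completion has rank at least max{r_i : i = 1, ..., k}; i.e., the minimum of the ranks of all antisymmetric completions of diag(A_1, ..., A_k) equals max{r_i : i = 1, ..., k}. -/

import Mathlib

/-!
If an antisymmetric matrix `A` has `A p q ≠ 0`, subtracting the wedge `u ∧ v` of (a multiple of)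
its `p`-th column `u` and its `q`-th column `v` kills rows and columns `p` and `q`, and
`range A = range (A - u ∧ v) ⊕ span {u, v}`, so the rank drops by exactly `2`. Hence antisymmetric
ranks are even and an antisymmetric matrix of rank `≤ 2 s` is a sum of `s` wedges. Writing every
`A i` as a sum of the same number `s = r / 2` of wedges and concatenating the vectors across the
blocks gives an antisymmetric completion that is itself a sum of `s` wedges, so of rank `≤ r`;
conversely every diagonal block is a submatrix of any completion.
-/

open Matrix Module Submodule

/-- `M` is a completion of the block diagonal partial matrix
`diag (A 0, ..., A (k-1))`: its `(i,i)` diagonal block equals `A i` for every `i`. -/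
def IsCompletion {K : Type*} [Field K] {k : ℕ} {n : Fin k → ℕ}
    (A : ∀ i : Fin k, Matrix (Fin (n i)) (Fin (n i)) K)
    (M : Matrix (Σ i : Fin k, Fin (n i)) (Σ i : Fin k, Fin (n i)) K) : Prop :=
  ∀ (i : Fin k) (x y : Fin (n i)), M ⟨i, x⟩ ⟨i, y⟩ = A i x y

namespace Matrix

variable {K m : Type*} [Field K]

def wedge (u v : m → K) : Matrix m m K :=
  vecMulVec u v - vecMulVec v u

@[simp]
lemma wedge_apply (u v : m → K) (x y : m) : wedge u v x y = u x * v y - v x * u y :=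
  rfl

@[simp]
lemma transpose_wedge (u v : m → K) : (wedge u v)ᵀ = -wedge u v := by
  ext x y
  simp only [transpose_apply, wedge_apply, neg_apply]
  ring

lemma apply_eq_neg_of_transpose_eq_neg {A : Matrix m m K} (hA : Aᵀ = -A) (x y : m) :
    A y x = -A x y := by
  simpa using congr_fun₂ hA x y

lemma apply_self_eq_zero_of_transpose_eq_neg (hchar : ringChar K ≠ 2) {A : Matrix m m K}
    (hA : Aᵀ = -A) (x : m) : A x x = 0 :=
  (Ring.eq_self_iff_eq_zero_of_char_ne_two hchar).mp (apply_eq_neg_of_transpose_eq_neg hA x x).symm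

variable [Fintype m]

lemma wedge_mulVec (u v x : m → K) : wedge u v *ᵥ x = (v ⬝ᵥ x) • u - (u ⬝ᵥ x) • v := by
  simp [wedge, sub_mulVec, vecMulVec_mulVec]

lemma rank_sum_wedge_le {ι : Type*} [Fintype ι] (u v : ι → m → K) :
    (∑ a, wedge (u a) (v a)).rank ≤ 2 * Fintype.card ι := by
  have hrange : LinearMap.range (∑ a, wedge (u a) (v a)).mulVecLin ≤
      span K (Set.range (Sum.elim u v)) := by
    rintro _ ⟨x, rfl⟩
    simp only [mulVecLin_apply, sum_mulVec, wedge_mulVec]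
    exact sum_mem fun a _ => sub_mem (smul_mem _ _ (subset_span ⟨.inl a, rfl⟩))
      (smul_mem _ _ (subset_span ⟨.inr a, rfl⟩))
  calc _ ≤ finrank K (span K (Set.range (Sum.elim u v))) := finrank_mono hrange
    _ ≤ Fintype.card (ι ⊕ ι) := finrank_range_le_card _
    _ = 2 * Fintype.card ι := by simp [two_mul]

variable {A : Matrix m m K}

lemma range_mulVecLin_sub_wedge_sup_span {u v : m → K} (hu : u ∈ LinearMap.range A.mulVecLin)
    (hv : v ∈ LinearMap.range A.mulVecLin) :
    LinearMap.range (A - wedge u v).mulVecLin ⊔ span K {u, v} = LinearMap.range A.mulVecLin := by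
  apply le_antisymm
  · refine sup_le ?_ (span_le.2 (Set.insert_subset hu (Set.singleton_subset_iff.2 hv)))
    rintro _ ⟨x, rfl⟩
    rw [mulVecLin_apply, sub_mulVec, wedge_mulVec]
    exact sub_mem ⟨x, rfl⟩ (sub_mem (smul_mem _ _ hu) (smul_mem _ _ hv))
  · rintro _ ⟨x, rfl⟩
    have hsplit : A *ᵥ x = (A - wedge u v) *ᵥ x + wedge u v *ᵥ x := by
      rw [← add_mulVec, sub_add_cancel]
    rw [mulVecLin_apply, hsplit, wedge_mulVec]
    exact add_mem (mem_sup_left ⟨x, rfl⟩) (mem_sup_right (sub_mem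
      (smul_mem _ _ (subset_span (by simp))) (smul_mem _ _ (subset_span (by simp)))))

lemma rank_sub_wedge_add_two (hchar : ringChar K ≠ 2) (hA : Aᵀ = -A) {p q : m}
    (hpq : A p q ≠ 0) :
    (A - wedge ((A p q)⁻¹ • A.col p) (A.col q)).rank + 2 = A.rank := by
  classical
  set u := (A p q)⁻¹ • A.col p
  set v := A.col q
  set B := A - wedge u v
  have hAp : A p p = 0 := apply_self_eq_zero_of_transpose_eq_neg hchar hA p
  have hAq : A q q = 0 := apply_self_eq_zero_of_transpose_eq_neg hchar hA q
  have hAqp : A q p = -A p q := apply_eq_neg_of_transpose_eq_neg hA p q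
  -- rows `p` and `q` of `B` vanish, hence so does every vector in its range
  have hrangeB : ∀ w ∈ LinearMap.range B.mulVecLin, w p = 0 ∧ w q = 0 := by
    have hrow (y : m) : B p y = 0 ∧ B q y = 0 := by
      have hyp := apply_eq_neg_of_transpose_eq_neg hA y p
      have hyq := apply_eq_neg_of_transpose_eq_neg hA y q
      simp only [B, u, v, sub_apply, wedge_apply, Pi.smul_apply, col_apply, smul_eq_mul, hAp, hAq,
        hAqp]
      constructor <;> field_simp
      · linear_combination A p q * hyp
      · linear_combination A p q * hyq
    rintro _ ⟨x, rfl⟩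
    simp [mulVec, dotProduct, hrow]
  have hcoef (α β : K) (hp : (α • u + β • v) p = 0) (hq : (α • u + β • v) q = 0) :
      α = 0 ∧ β = 0 := by
    constructor
    · simpa [u, v, hAq, hAqp, hpq] using hq
    · simpa [u, v, hAp, hpq] using hp
  have hS : finrank K (span K {u, v}) = 2 := by
    rw [← range_cons_cons_empty u v ![], finrank_span_eq_card]
    · rfl
    · exact LinearIndependent.pair_iff.2 fun s t h => hcoef s t (congr_fun h p) (congr_fun h q)
  have hinf : LinearMap.range B.mulVecLin ⊓ span K {u, v} = ⊥ := by
    refine eq_bot_iff.2 fun w ⟨hwB, hwS⟩ => ?_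
    obtain ⟨α, β, rfl⟩ := mem_span_pair.1 hwS
    obtain ⟨rfl, rfl⟩ := hcoef α β (hrangeB _ hwB).1 (hrangeB _ hwB).2
    simp
  have hsup : LinearMap.range B.mulVecLin ⊔ span K {u, v} = LinearMap.range A.mulVecLin :=
    range_mulVecLin_sub_wedge_sup_span (smul_mem _ _ ⟨Pi.single p 1, mulVec_single_one A p⟩)
      ⟨Pi.single q 1, mulVec_single_one A q⟩
  have := finrank_sup_add_finrank_inf_eq (LinearMap.range B.mulVecLin) (span K {u, v})
  rw [hsup, hinf, finrank_bot, hS] at this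
  exact this.symm.trans (add_zero _)

lemma exists_eq_add_wedge_of_ne_zero (hchar : ringChar K ≠ 2) (hA : Aᵀ = -A) (hA0 : A ≠ 0) :
    ∃ (B : Matrix m m K) (u v : m → K), Bᵀ = -B ∧ B.rank + 2 = A.rank ∧ A = B + wedge u v := by
  obtain ⟨p, q, hpq⟩ : ∃ p q, A p q ≠ 0 := by
    by_contra! h
    exact hA0 (ext h)
  refine ⟨_, _, _, ?_, rank_sub_wedge_add_two hchar hA hpq, (sub_add_cancel _ _).symm⟩
  rw [transpose_sub, transpose_wedge, hA, neg_sub_neg, neg_sub]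

theorem even_rank_of_transpose_eq_neg (hchar : ringChar K ≠ 2) (hA : Aᵀ = -A) : Even A.rank := by
  induction hr : A.rank using Nat.strong_induction_on generalizing A with
  | _ r ih =>
    obtain rfl | hA0 := eq_or_ne A 0
    · rw [← hr, rank_zero]
      exact .zero
    obtain ⟨B, -, -, hB, hrank, -⟩ := exists_eq_add_wedge_of_ne_zero hchar hA hA0
    obtain ⟨t, ht⟩ := ih B.rank (by omega) hB rfl
    exact ⟨t + 1, by omega⟩

theorem exists_eq_sum_wedge (hchar : ringChar K ≠ 2) (hA : Aᵀ = -A) {s : ℕ}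
    (hrank : A.rank ≤ 2 * s) : ∃ u v : Fin s → m → K, A = ∑ a, wedge (u a) (v a) := by
  induction s generalizing A with
  | zero =>
    obtain rfl | hA0 := eq_or_ne A 0
    · exact ⟨0, 0, by simp⟩
    obtain ⟨B, -, -, -, hrank', -⟩ := exists_eq_add_wedge_of_ne_zero hchar hA hA0
    omega
  | succ s ih =>
    obtain rfl | hA0 := eq_or_ne A 0
    · exact ⟨0, 0, by ext; simp⟩
    obtain ⟨B, u, v, hB, hrank', rfl⟩ := exists_eq_add_wedge_of_ne_zero hchar hA hA0
    obtain ⟨u', v', rfl⟩ := ih hB (by omega)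
    exact ⟨Fin.cons u u', Fin.cons v v', by simp [Fin.sum_univ_succ, add_comm]⟩

end Matrix

section Completion

variable {K : Type*} [Field K] {k : ℕ} {n : Fin k → ℕ}
  {A : ∀ i : Fin k, Matrix (Fin (n i)) (Fin (n i)) K}

lemma IsCompletion.rank_le {M : Matrix (Σ i : Fin k, Fin (n i)) (Σ i : Fin k, Fin (n i)) K}
    (hM : IsCompletion A M) (i : Fin k) : (A i).rank ≤ M.rank := by
  have hblock : A i = M.submatrix (Sigma.mk i) (Sigma.mk i) := by
    ext x y
    exact (hM i x y).symm
  exact hblock ▸ rank_submatrix_le M _ _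

lemma exists_isCompletion_transpose_eq_neg_rank_le (hchar : ringChar K ≠ 2)
    (hA : ∀ i, (A i)ᵀ = -(A i)) {s : ℕ} (hrank : ∀ i, (A i).rank ≤ 2 * s) :
    ∃ M, IsCompletion A M ∧ Mᵀ = -M ∧ M.rank ≤ 2 * s := by
  choose u v huv using fun i => exists_eq_sum_wedge hchar (hA i) (hrank i)
  refine ⟨∑ a, wedge (fun z => u z.1 a z.2) (fun z => v z.1 a z.2), fun i x y => ?_, ?_, ?_⟩
  · simp [huv i, Matrix.sum_apply]
  · simp [transpose_sum]
  · simpa using rank_sum_wedge_le (fun a (z : Σ i, Fin (n i)) => u z.1 a z.2)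
      fun a z => v z.1 a z.2

end Completion

theorem stmt_11_general {K : Type*} [Field K] (hchar : ringChar K ≠ 2)
    {k : ℕ} {n : Fin k → ℕ}
    (A : ∀ i : Fin k, Matrix (Fin (n i)) (Fin (n i)) K)
    (hanti : ∀ i, (A i)ᵀ = -(A i)) :
    IsLeast {l : ℕ | ∃ M, IsCompletion A M ∧ Mᵀ = -M ∧ M.rank = l}
      (Finset.univ.sup (fun i : Fin k => (A i).rank)) := by
  set r := Finset.univ.sup fun i => (A i).rank
  have hlower (M) (hM : IsCompletion A M) : r ≤ M.rank :=
    Finset.sup_le fun i _ => hM.rank_le i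
  refine ⟨?_, fun l ⟨M, hM, _, hl⟩ => hl ▸ hlower M hM⟩
  -- antisymmetric ranks are even, so `rank (A i) ≤ r` improves to `rank (A i) ≤ 2 * (r / 2)`
  have hrank (i) : (A i).rank ≤ 2 * (r / 2) := by
    obtain ⟨t, ht⟩ := even_rank_of_transpose_eq_neg hchar (hanti i)
    have := Finset.le_sup (f := fun i => (A i).rank) (Finset.mem_univ i)
    omega
  obtain ⟨M, hM, hskew, hMrank⟩ := exists_isCompletion_transpose_eq_neg_rank_le hchar hanti hrank
  exact ⟨M, hM, hskew, le_antisymm (hMrank.trans (Nat.mul_div_le r 2)) (hlower M hM)⟩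

/-- The minimum of the ranks of the antisymmetric completions of
`diag (A 0, ..., A (k-1))` is `max {rank (A i)}`. -/
theorem stmt_11 {K : Type*} [Field K] (hchar : ringChar K ≠ 2)
    {k : ℕ} (hk : 0 < k) {n : Fin k → ℕ} (hn : ∀ i, 0 < n i)
    (A : ∀ i : Fin k, Matrix (Fin (n i)) (Fin (n i)) K)
    (hanti : ∀ i, (A i)ᵀ = -(A i)) :
    IsLeast {l : ℕ | ∃ M, IsCompletion A M ∧ Mᵀ = -M ∧ M.rank = l}
      (Finset.univ.sup (fun i : Fin k => (A i).rank)) :=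
  stmt_11_general hchar A hanti
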